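/- (Corollary 1.) If (f*,g*) is a min-max strategy for the team in the simplified game G_s (i.e., it achieves min over G_s-strategies of max_{gᵃ} J), then (f*,g*) is a min-max strategy for the team in the original game G; furthermore the min-max values of G and G_s are identical: S^u(G)=S^u(G_s). -/

import Mathlib

open Finset
open scoped Classical BigOperators

namespace TA

/-- The primitive model of the team-vs-adversary control system (Section II of the paper):
finite horizon `T`, finite global/local state spaces, finite action spaces, independent
initial states, controlled Markovian dynamics given by transition kernels, an erasure
parameter `pe`, an observation kernel `obs` for the adversary's observation `Y_t`,
a stage cost `cost` and a communication cost `commCost`. -/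
structure Model where
  T : ℕ
  hT : 0 < T
  X0 : Type
  X1 : Type
  X2 : Type
  U1 : Type
  U2 : Type
  Ua : Type
  Y : Type
  [fX0 : Fintype X0]
  [fX1 : Fintype X1]
  [fX2 : Fintype X2]
  [fU1 : Fintype U1]
  [fU2 : Fintype U2]
  [fUa : Fintype Ua]
  [fY : Fintype Y]
  [nX0 : Nonempty X0]
  [nX1 : Nonempty X1]
  [nX2 : Nonempty X2]
  [nU1 : Nonempty U1]
  [nU2 : Nonempty U2]
  [nUa : Nonempty Ua]
  [nY : Nonempty Y]
  init0 : X0 → ℝ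
  init1 : X1 → ℝ
  init2 : X2 → ℝ
  trans0 : X0 → Ua → X0 → ℝ
  trans1 : X0 → X1 → U1 → X1 → ℝ
  trans2 : X0 → X2 → U2 → X2 → ℝ
  pe : X0 → ℝ
  obs : Option (X1 × X2) → Bool × Bool → X0 → Y → ℝ
  cost : ℕ → X0 → X1 × X2 → U1 × U2 → Ua → ℝ
  commCost : X0 → X1 × X2 → ℝ
  init0_nonneg : ∀ x, 0 ≤ init0 x
  init1_nonneg : ∀ x, 0 ≤ init1 x
  init2_nonneg : ∀ x, 0 ≤ init2 x
  init0_sum : ∑ x, init0 x = 1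
  init1_sum : ∑ x, init1 x = 1
  init2_sum : ∑ x, init2 x = 1
  trans0_nonneg : ∀ x u x', 0 ≤ trans0 x u x'
  trans1_nonneg : ∀ x0 x u x', 0 ≤ trans1 x0 x u x'
  trans2_nonneg : ∀ x0 x u x', 0 ≤ trans2 x0 x u x'
  trans0_sum : ∀ x u, ∑ x', trans0 x u x' = 1
  trans1_sum : ∀ x0 x u, ∑ x', trans1 x0 x u x' = 1
  trans2_sum : ∀ x0 x u, ∑ x', trans2 x0 x u x' = 1
  pe_nonneg : ∀ x, 0 ≤ pe x
  pe_le_one : ∀ x, pe x ≤ 1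
  obs_nonneg : ∀ z m x y, 0 ≤ obs z m x y
  obs_sum : ∀ z m x, ∑ y, obs z m x y = 1

attribute [instance] Model.fX0 Model.fX1 Model.fX2 Model.fU1 Model.fU2 Model.fUa Model.fY
attribute [instance] Model.nX0 Model.nX1 Model.nX2 Model.nU1 Model.nU2 Model.nUa Model.nY

/-- A full system trajectory over the horizon: global states, local states, communication
decisions, messages over the erasure channel, adversary observations, and all actions. -/
abbrev Traj (M : Model) :=
  (Fin M.T → M.X0) × (Fin M.T → M.X1) × (Fin M.T → M.X2) ×
  (Fin M.T → Bool) × (Fin M.T → Bool) × (Fin M.T → Option (M.X1 × M.X2)) ×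
  (Fin M.T → M.Y) × (Fin M.T → M.U1) × (Fin M.T → M.U2) × (Fin M.T → M.Ua)

def idx (M : Model) (t : ℕ) : Fin M.T := if h : t < M.T then ⟨t, h⟩ else ⟨0, M.hT⟩

variable {M : Model}

def X0v (ω : Traj M) (t : ℕ) : M.X0 := ω.1 (idx M t)
def X1v (ω : Traj M) (t : ℕ) : M.X1 := ω.2.1 (idx M t)
def X2v (ω : Traj M) (t : ℕ) : M.X2 := ω.2.2.1 (idx M t)
def M1v (ω : Traj M) (t : ℕ) : Bool := ω.2.2.2.1 (idx M t)
def M2v (ω : Traj M) (t : ℕ) : Bool := ω.2.2.2.2.1 (idx M t)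
def Zv (ω : Traj M) (t : ℕ) : Option (M.X1 × M.X2) := ω.2.2.2.2.2.1 (idx M t)
def Yv (ω : Traj M) (t : ℕ) : M.Y := ω.2.2.2.2.2.2.1 (idx M t)
def U1v (ω : Traj M) (t : ℕ) : M.U1 := ω.2.2.2.2.2.2.2.1 (idx M t)
def U2v (ω : Traj M) (t : ℕ) : M.U2 := ω.2.2.2.2.2.2.2.2.1 (idx M t)
def UAv (ω : Traj M) (t : ℕ) : M.Ua := ω.2.2.2.2.2.2.2.2.2 (idx M t)
def Mv (ω : Traj M) (t : ℕ) : Bool × Bool := (M1v ω t, M2v ω t)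

/-- The list of values `f 0, f 1, …, f (t-1)` (a "prefix" of a stochastic process). -/
def pre {α : Type _} (t : ℕ) (f : ℕ → α) : List α := (List.range t).map f

/-- Realizations of agent 1's information `I¹_t` (resp. `I¹_{t⁺}`):
`(X⁰_{1:t}, X¹_{1:t}, U¹_{1:t-1}, M_{1:t-1}, Z^er_{1:t-1}, Uᵃ_{1:t-1}, Y_{1:t-1})`. -/
abbrev Hist1 (M : Model) :=
  List M.X0 × List M.X1 × List M.U1 × List (Bool × Bool) ×
  List (Option (M.X1 × M.X2)) × List M.Ua × List M.Y

/-- Realizations of agent 2's information `I²_t` (resp. `I²_{t⁺}`). -/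
abbrev Hist2 (M : Model) :=
  List M.X0 × List M.X2 × List M.U2 × List (Bool × Bool) ×
  List (Option (M.X1 × M.X2)) × List M.Ua × List M.Y

/-- Realizations of the team's common information `C^team_t = I¹_t ∩ I²_t`. -/
abbrev HistC (M : Model) :=
  List M.X0 × List (Bool × Bool) × List (Option (M.X1 × M.X2)) × List M.Ua × List M.Y

def info1 (t : ℕ) (ω : Traj M) : Hist1 M :=
  (pre (t+1) (X0v ω), pre (t+1) (X1v ω), pre t (U1v ω), pre t (Mv ω),
   pre t (Zv ω), pre t (UAv ω), pre t (Yv ω))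

def info1p (t : ℕ) (ω : Traj M) : Hist1 M :=
  (pre (t+1) (X0v ω), pre (t+1) (X1v ω), pre t (U1v ω), pre (t+1) (Mv ω),
   pre (t+1) (Zv ω), pre t (UAv ω), pre (t+1) (Yv ω))

def info2 (t : ℕ) (ω : Traj M) : Hist2 M :=
  (pre (t+1) (X0v ω), pre (t+1) (X2v ω), pre t (U2v ω), pre t (Mv ω),
   pre t (Zv ω), pre t (UAv ω), pre t (Yv ω))

def info2p (t : ℕ) (ω : Traj M) : Hist2 M :=
  (pre (t+1) (X0v ω), pre (t+1) (X2v ω), pre t (U2v ω), pre (t+1) (Mv ω),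
   pre (t+1) (Zv ω), pre t (UAv ω), pre (t+1) (Yv ω))

/-- The team's common information `C^team_t` before communication at time `t`. -/
def teamCom (t : ℕ) (ω : Traj M) : HistC M :=
  (pre (t+1) (X0v ω), pre t (Mv ω), pre t (Zv ω), pre t (UAv ω), pre t (Yv ω))

/-- The team's common information `C^team_{t⁺}` after communication at time `t`. -/
def teamComP (t : ℕ) (ω : Traj M) : HistC M :=
  (pre (t+1) (X0v ω), pre (t+1) (Mv ω), pre (t+1) (Zv ω), pre t (UAv ω), pre (t+1) (Yv ω))

/-- A behavioral communication/control strategy pair `(f,g) = (f¹,f²,g¹,g²)` for the team: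
`fⁱ_t` selects a distribution on `{0,1}` for `Mⁱ_t` given `Iⁱ_t`; `gⁱ_t` selects a
distribution on `𝒰ⁱ` for `Uⁱ_t` given `Iⁱ_{t⁺}`. -/
structure TeamStrategy (M : Model) where
  f1 : ℕ → Hist1 M → Bool → ℝ
  f2 : ℕ → Hist2 M → Bool → ℝ
  g1 : ℕ → Hist1 M → M.U1 → ℝ
  g2 : ℕ → Hist2 M → M.U2 → ℝ
  f1_nonneg : ∀ t h m, 0 ≤ f1 t h m
  f2_nonneg : ∀ t h m, 0 ≤ f2 t h m
  g1_nonneg : ∀ t h u, 0 ≤ g1 t h u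
  g2_nonneg : ∀ t h u, 0 ≤ g2 t h u
  f1_sum : ∀ t h, ∑ m, f1 t h m = 1
  f2_sum : ∀ t h, ∑ m, f2 t h m = 1
  g1_sum : ∀ t h, ∑ u, g1 t h u = 1
  g2_sum : ∀ t h, ∑ u, g2 t h u = 1

/-- A behavioral strategy for the adversary: `gᵃ_t` selects a distribution on `𝒰ᵃ`
given the adversary's information `Iᵃ_{t⁺}`, whose realizations live in `A`. -/
structure AdvStrategy (M : Model) (A : Type _) where
  ga : ℕ → A → M.Ua → ℝ
  ga_nonneg : ∀ t a u, 0 ≤ ga t a u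
  ga_sum : ∀ t a, ∑ u, ga t a u = 1

/-- The kernel of the erasure channel: if `M^or_t = 0`, no message; if `M^or_t = 1`, the
joint local state is delivered w.p. `1 - pe(x⁰)` and erased w.p. `pe(x⁰)`. -/
noncomputable def zKer (M : Model) (x0 : M.X0) (m : Bool × Bool) (x : M.X1 × M.X2)
    (z : Option (M.X1 × M.X2)) : ℝ :=
  if m = (false, false) then (if z = none then 1 else 0)
  else
    match z with
    | none => M.pe x0
    | some x' => if x' = x then 1 - M.pe x0 else 0

/-- The probability of a full trajectory under the team strategy `σ`, the adversary
strategy `γ`, where `iap t ω` is the realization of the adversary's information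
`Iᵃ_{t⁺}` along `ω` (this parametrizes the adversary's information structure). -/
noncomputable def prob (σ : TeamStrategy M) {A : Type _} (γ : AdvStrategy M A)
    (iap : ℕ → Traj M → A) (ω : Traj M) : ℝ :=
  M.init0 (X0v ω 0) * M.init1 (X1v ω 0) * M.init2 (X2v ω 0) *
  (∏ t ∈ Finset.range M.T,
    (σ.f1 t (info1 t ω) (M1v ω t) * σ.f2 t (info2 t ω) (M2v ω t) *
     zKer M (X0v ω t) (Mv ω t) (X1v ω t, X2v ω t) (Zv ω t) *
     M.obs (Zv ω t) (Mv ω t) (X0v ω t) (Yv ω t) *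
     σ.g1 t (info1p t ω) (U1v ω t) * σ.g2 t (info2p t ω) (U2v ω t) *
     γ.ga t (iap t ω) (UAv ω t))) *
  (∏ t ∈ Finset.range (M.T - 1),
    (M.trans0 (X0v ω t) (UAv ω t) (X0v ω (t+1)) *
     M.trans1 (X0v ω t) (X1v ω t) (U1v ω t) (X1v ω (t+1)) *
     M.trans2 (X0v ω t) (X2v ω t) (U2v ω t) (X2v ω (t+1))))

/-- Probability of an event (a set of trajectories). -/
noncomputable def pr (σ : TeamStrategy M) {A : Type _} (γ : AdvStrategy M A)
    (iap : ℕ → Traj M → A) (E : Traj M → Prop) : ℝ :=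
  ∑ ω : Traj M, if E ω then prob σ γ iap ω else 0

/-- Conditional probability `P(F | E)`. -/
noncomputable def cpr (σ : TeamStrategy M) {A : Type _} (γ : AdvStrategy M A)
    (iap : ℕ → Traj M → A) (E F : Traj M → Prop) : ℝ :=
  pr σ γ iap (fun ω => F ω ∧ E ω) / pr σ γ iap E

/-- Total cost `Σ_t c_t(X⁰_t,X_t,U_t,Uᵃ_t) + ρ(X⁰_t,X_t) 1{M^or_t = 1}` along a trajectory. -/
noncomputable def totalCost (ω : Traj M) : ℝ :=
  ∑ t ∈ Finset.range M.T,
    (M.cost t (X0v ω t) (X1v ω t, X2v ω t) (U1v ω t, U2v ω t) (UAv ω t) +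
     (if (M1v ω t || M2v ω t) then M.commCost (X0v ω t) (X1v ω t, X2v ω t) else 0))

/-- Expected total cost `J((f,g),gᵃ)`. -/
noncomputable def J (σ : TeamStrategy M) {A : Type _} (γ : AdvStrategy M A)
    (iap : ℕ → Traj M → A) : ℝ :=
  ∑ ω : Traj M, prob σ γ iap ω * totalCost ω

end TA
namespace TA

/-- An abstract information structure for the adversary satisfying the structural parts of
Assumption 1: the common information `C_t = Iᵃ_t` (resp. `C_{t⁺} = Iᵃ_{t⁺}`) and the team's
common private information `D_t = P¹_t ∩ P²_t` (resp. `D_{t⁺}`) are deterministic functions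
of the trajectory; together, `(C_t, D_t)` carries exactly the team's common information
`C^team_t = I¹_t ∩ I²_t` (nestedness: `C_t ⊆ I¹_t ∩ I²_t` and `C_t ∪ D_t = C^team_t`);
and the adversary's information grows with time (monotonicity:
`Iᵃ_t ⊆ Iᵃ_{t⁺} ⊆ Iᵃ_{t+1}`, expressed as: finer information determines coarser one). -/
structure InfoStructure (M : Model) where
  C : Type
  D : Type
  infoC : ℕ → Traj M → C
  infoCp : ℕ → Traj M → C
  infoD : ℕ → Traj M → D
  infoDp : ℕ → Traj M → D
  cd_team : ∀ (t : ℕ) (ω ω' : Traj M),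
    (infoC t ω = infoC t ω' ∧ infoD t ω = infoD t ω') ↔ teamCom t ω = teamCom t ω'
  cdp_team : ∀ (t : ℕ) (ω ω' : Traj M),
    (infoCp t ω = infoCp t ω' ∧ infoDp t ω = infoDp t ω') ↔ teamComP t ω = teamComP t ω'
  mono1 : ∀ (t : ℕ) (ω ω' : Traj M), infoCp t ω = infoCp t ω' → infoC t ω = infoC t ω'
  mono2 : ∀ (t : ℕ) (ω ω' : Traj M), infoC (t+1) ω = infoC (t+1) ω' → infoCp t ω = infoCp t ω'

end TA

namespace TA

/-- A team strategy is *simplified* (game `G_s`) if each agent's communication decision at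
time `t` depends on its information only through `(Xⁱ_t, C_t, D_t)` and its control action
at time `t⁺` depends only on `(Xⁱ_t, C_{t⁺}, D_{t⁺})`; i.e., the past local states and
actions `Xⁱ_{1:t-1}, Uⁱ_{1:t-1}` are ignored. -/
def Simplified {M : Model} (IS : InfoStructure M) (σ : TeamStrategy M) : Prop :=
  (∀ (t : ℕ) (ω ω' : Traj M), X1v ω t = X1v ω' t → IS.infoC t ω = IS.infoC t ω' →
      IS.infoD t ω = IS.infoD t ω' → σ.f1 t (info1 t ω) = σ.f1 t (info1 t ω')) ∧
  (∀ (t : ℕ) (ω ω' : Traj M), X2v ω t = X2v ω' t → IS.infoC t ω = IS.infoC t ω' →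
      IS.infoD t ω = IS.infoD t ω' → σ.f2 t (info2 t ω) = σ.f2 t (info2 t ω')) ∧
  (∀ (t : ℕ) (ω ω' : Traj M), X1v ω t = X1v ω' t → IS.infoCp t ω = IS.infoCp t ω' →
      IS.infoDp t ω = IS.infoDp t ω' → σ.g1 t (info1p t ω) = σ.g1 t (info1p t ω')) ∧
  (∀ (t : ℕ) (ω ω' : Traj M), X2v ω t = X2v ω' t → IS.infoCp t ω = IS.infoCp t ω' →
      IS.infoDp t ω = IS.infoDp t ω' → σ.g2 t (info2p t ω) = σ.g2 t (info2p t ω'))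

/-- The min-max (upper) value `S^u(G)` of the original game `G`. -/
noncomputable def SuG (M : Model) (IS : InfoStructure M) : ℝ :=
  ⨅ σ : TeamStrategy M, ⨆ γ : AdvStrategy M IS.C, J σ γ IS.infoCp

/-- The min-max (upper) value `S^u(G_s)` of the simplified game `G_s`: same dynamics and
cost as `G`, but the team is restricted to simplified strategies. -/
noncomputable def SuGs (M : Model) (IS : InfoStructure M) : ℝ :=
  ⨅ σ : {σ : TeamStrategy M // Simplified IS σ}, ⨆ γ : AdvStrategy M IS.C, J σ.1 γ IS.infoCp

end TA

/-!
Fix a team strategy. The expected stage cost at time `t` only involves the trajectory up to `t`,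
since the later transition kernels sum to one. Up to time `t` the probability of a trajectory is
agent 1's own likelihood, a function of its information and its action, times a factor that does
not involve agent 1's local states and actions at all. So, for every value of the other
coordinates, the weight of `(X¹_t, U¹_t)` is obtained recursively in `t` from the conditional
laws of `M¹_t` and `U¹_t` given `X¹_t` and the team's common information. Replacing agent 1's
laws by these conditional laws therefore changes neither this weight nor any expected cost,
whatever the adversary does with information common to the team. Exchanging the agents does the
same for agent 2. Every strategy thus has a simplified one with the same cost against every
adversary, so `S^u(G)` and `S^u(G_s)` are infima of the same set of reals.
-/

namespace TA

noncomputable def ind (p : Prop) : ℝ := if p then 1 else 0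

@[simp] lemma ind_pos {p : Prop} (h : p) : ind p = 1 := if_pos h
@[simp] lemma ind_neg {p : Prop} (h : ¬ p) : ind p = 0 := if_neg h

lemma ind_nonneg (p : Prop) : 0 ≤ ind p := by unfold ind; split <;> norm_num

lemma ind_mul_congr {p : Prop} {a b : ℝ} (h : p → a = b) : ind p * a = ind p * b := by
  by_cases hp : p <;> simp [hp, h]

lemma sum_ind_eq_mul {α : Type*} [Fintype α] (a : α) (F : α → ℝ) :
    ∑ v, ind (a = v) * F v = F a := by
  simp [ind]

section FunctionSpace

variable {ι α β : Type*} [Fintype ι] [DecidableEq ι] [Fintype α] [Fintype β]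

lemma sum_eq_sum_fiber (G : (ι → α) → ℝ) (j : ι) :
    ∑ f, G f = ∑ v, ∑ f, ind (f j = v) * G f := by
  rw [Finset.sum_comm]
  exact Finset.sum_congr rfl fun f _ => (sum_ind_eq_mul (f j) fun _ => G f).symm

lemma sum_fiber_eq_of_update (G : (ι → α) → ℝ) (j : ι) (a b : α)
    (hG : ∀ f, f j = a → G (Function.update f j b) = G f) :
    ∑ f, ind (f j = a) * G f = ∑ f, ind (f j = b) * G f := by
  simp only [ind, ite_mul, one_mul, zero_mul, ← Finset.sum_filter]
  refine Finset.sum_nbij' (Function.update · j b) (Function.update · j a) ?_ ?_ ?_ ?_ ?_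
  all_goals simp +contextual [Function.update_idem, hG]

lemma sum_fiber_eq_of_forall_update (G : (ι → α) → ℝ) (j : ι)
    (hG : ∀ f v, G (Function.update f j v) = G f) (a : α) :
    ∑ f, ind (f j = a) * G f = (Fintype.card α : ℝ)⁻¹ * ∑ f, G f := by
  have : Nonempty α := ⟨a⟩
  rw [sum_eq_sum_fiber G j, Finset.sum_congr rfl fun b _ =>
    sum_fiber_eq_of_update G j b a fun f _ => hG f a]
  simp

lemma sum_apply_mul_eq_of_forall_update (G : (ι → α) → ℝ) (j : ι)
    (hG : ∀ f v, G (Function.update f j v) = G f) (h : α → ℝ) :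
    ∑ f, h (f j) * G f = (Fintype.card α : ℝ)⁻¹ * (∑ v, h v) * ∑ f, G f := by
  calc ∑ f, h (f j) * G f = ∑ v, h v * ∑ f, ind (f j = v) * G f := by
        rw [sum_eq_sum_fiber _ j]
        refine Finset.sum_congr rfl fun v _ => ?_
        rw [Finset.mul_sum]
        exact Finset.sum_congr rfl fun f _ => by by_cases hf : f j = v <;> simp [hf]
    _ = (Fintype.card α : ℝ)⁻¹ * (∑ v, h v) * ∑ f, G f := by
        simp_rw [sum_fiber_eq_of_forall_update G j hG, ← Finset.sum_mul]
        ring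

lemma sum_update_eq_card_mul (F : (ι → α) → ℝ) (j : ι) :
    ∑ v, ∑ f, F (Function.update f j v) = Fintype.card α * ∑ f, F f := by
  rw [sum_eq_sum_fiber F j, Finset.mul_sum]
  refine Finset.sum_congr rfl fun v _ => ?_
  have : Nonempty α := ⟨v⟩
  have hfiber := sum_fiber_eq_of_forall_update (fun f => F (Function.update f j v)) j
    (fun f w => by simp) v
  rw [← inv_mul_eq_iff_eq_mul₀ (Nat.cast_ne_zero.2 Fintype.card_ne_zero), ← hfiber]
  exact Finset.sum_congr rfl fun f _ =>
    ind_mul_congr fun hf => by rw [← hf, Function.update_eq_self]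

lemma sum_mul_eq_of_kernel [Nonempty α] (q g : (ι → α) → ℝ) (j : ι)
    (hq : ∀ f v, q (Function.update f j v) = q f)
    (hg : ∀ f, ∑ v, g (Function.update f j v) = 1) :
    ∑ f, q f * g f = (Fintype.card α : ℝ)⁻¹ * ∑ f, q f := by
  rw [eq_inv_mul_iff_mul_eq₀ (Nat.cast_ne_zero.2 Fintype.card_ne_zero),
    ← sum_update_eq_card_mul _ j, Finset.sum_comm]
  exact Finset.sum_congr rfl fun f _ => by simp_rw [hq, ← Finset.mul_sum, hg, mul_one]

lemma sum_ind_eq_pair_mul [Nonempty β] (G : (ι → α × β) → ℝ) (j : ι)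
    (hG : ∀ f b, G (Function.update f j ((f j).1, b)) = G f) (x : α) (u : β) :
    ∑ f, ind (f j = (x, u)) * G f = (Fintype.card β : ℝ)⁻¹ * ∑ f, ind ((f j).1 = x) * G f := by
  have hfiber (b : β) : ∑ f, ind (f j = (x, b)) * G f = ∑ f, ind (f j = (x, u)) * G f :=
    sum_fiber_eq_of_update G j _ _ fun f hf => by simpa [hf] using hG f u
  have hsplit : ∑ f, ind ((f j).1 = x) * G f = ∑ b, ∑ f, ind (f j = (x, b)) * G f := by
    rw [sum_comm]
    refine sum_congr rfl fun f _ => ?_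
    rw [← sum_mul]
    by_cases h : (f j).1 = x <;> simp [ind, h, Prod.ext_iff]
  rw [hsplit, sum_congr rfl fun b _ => hfiber b, sum_const, card_univ, nsmul_eq_mul, ← mul_assoc,
    inv_mul_cancel₀ (Nat.cast_ne_zero.2 Fintype.card_ne_zero), one_mul]

end FunctionSpace

noncomputable section Normalize

variable {β : Type*} [Fintype β]

def normalize (w : β → ℝ) (b : β) : ℝ :=
  if ∑ b', w b' = 0 then (Fintype.card β : ℝ)⁻¹ else w b / ∑ b', w b'

lemma normalize_nonneg {w : β → ℝ} (hw : ∀ b, 0 ≤ w b) (b : β) : 0 ≤ normalize w b := by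
  unfold normalize; split
  · positivity
  · exact div_nonneg (hw b) (sum_nonneg fun b _ => hw b)

lemma sum_normalize [Nonempty β] (w : β → ℝ) : ∑ b, normalize w b = 1 := by
  unfold normalize; split
  · simp
  · rw [← sum_div, div_self ‹_›]

lemma sum_mul_normalize {w : β → ℝ} (hw : ∀ b, 0 ≤ w b) (b : β) :
    (∑ b', w b') * normalize w b = w b := by
  unfold normalize; split
  · rw [(sum_eq_zero_iff_of_nonneg fun b _ => hw b).1 ‹_› b (mem_univ b)]; simp [*]
  · field_simp

end Normalize

section Prefix

variable {α β : Type*}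

lemma pre_eq_pre_iff {n : ℕ} {f g : ℕ → α} : pre n f = pre n g ↔ ∀ s < n, f s = g s := by
  simp [pre, List.map_inj_left]

lemma pre_comp (n : ℕ) (g : α → β) (f : ℕ → α) : pre n (g ∘ f) = (pre n f).map g := by
  simp [pre]

lemma pre_getD (f : ℕ → α) {n k : ℕ} (h : k < n) (d : α) : (pre n f).getD k d = f k := by
  simp [pre, List.getD_eq_getElem?_getD, h]

lemma pre_succ_congr {n : ℕ} {f g : ℕ → α} (h : ∀ s < n, f s = g s) (hn : f n = g n) :
    pre (n + 1) f = pre (n + 1) g :=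
  pre_eq_pre_iff.2 fun s hs => (Nat.lt_succ_iff_lt_or_eq.1 hs).elim (h s) (· ▸ hn)

end Prefix

section Slices

variable {M : Model}

lemma idx_val {s : ℕ} (h : s < M.T) : (idx M s : ℕ) = s := by simp [idx, h]

lemma idx_ne {s t : ℕ} (hs : s < M.T) (ht : t < M.T) (h : s ≠ t) : idx M s ≠ idx M t :=
  fun he => h <| by rw [← idx_val hs, ← idx_val ht, he]

abbrev Slice (M : Model) :=
  M.X0 × M.X1 × M.X2 × Bool × Bool × Option (M.X1 × M.X2) × M.Y × M.U1 × M.U2 × M.Ua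

def slice (ω : Traj M) (i : Fin M.T) : Slice M :=
  (ω.1 i, ω.2.1 i, ω.2.2.1 i, ω.2.2.2.1 i, ω.2.2.2.2.1 i, ω.2.2.2.2.2.1 i,
   ω.2.2.2.2.2.2.1 i, ω.2.2.2.2.2.2.2.1 i, ω.2.2.2.2.2.2.2.2.1 i, ω.2.2.2.2.2.2.2.2.2 i)

def ofSlices (F : Fin M.T → Slice M) : Traj M :=
  (fun i => (F i).1, fun i => (F i).2.1, fun i => (F i).2.2.1, fun i => (F i).2.2.2.1,
   fun i => (F i).2.2.2.2.1, fun i => (F i).2.2.2.2.2.1, fun i => (F i).2.2.2.2.2.2.1,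
   fun i => (F i).2.2.2.2.2.2.2.1, fun i => (F i).2.2.2.2.2.2.2.2.1,
   fun i => (F i).2.2.2.2.2.2.2.2.2)

def sliceEquiv : Traj M ≃ (Fin M.T → Slice M) where
  toFun := slice
  invFun := ofSlices
  left_inv _ := rfl
  right_inv _ := rfl

lemma sum_traj_eq_sum_slices (F : Traj M → ℝ) :
    ∑ ω, F ω = ∑ G : Fin M.T → Slice M, F (ofSlices G) :=
  (Fintype.sum_equiv sliceEquiv.symm _ _ fun _ => rfl).symm

variable {ω ω' : Traj M} {t : ℕ}

lemma teamComP_congr (h : ∀ r < t, slice ω (idx M r) = slice ω' (idx M r))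
    (h0 : X0v ω t = X0v ω' t) (hm : Mv ω t = Mv ω' t) (hz : Zv ω t = Zv ω' t)
    (hy : Yv ω t = Yv ω' t) : teamComP t ω = teamComP t ω' := by
  have e := fun {γ : Type _} (φ : Slice M → γ) r (hr : r < t) => congrArg φ (h r hr)
  simp only [teamComP, Prod.mk.injEq]
  exact ⟨pre_succ_congr (e (·.1)) h0, pre_succ_congr (e fun v => (v.2.2.2.1, v.2.2.2.2.1)) hm,
    pre_succ_congr (e (·.2.2.2.2.2.1)) hz, pre_eq_pre_iff.2 (e (·.2.2.2.2.2.2.2.2.2)),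
    pre_succ_congr (e (·.2.2.2.2.2.2.1)) hy⟩

lemma info1_congr (h : ∀ r < t, slice ω (idx M r) = slice ω' (idx M r))
    (h0 : X0v ω t = X0v ω' t) (h1 : X1v ω t = X1v ω' t) : info1 t ω = info1 t ω' := by
  have e := fun {γ : Type _} (φ : Slice M → γ) r (hr : r < t) => congrArg φ (h r hr)
  simp only [info1, Prod.mk.injEq]
  exact ⟨pre_succ_congr (e (·.1)) h0, pre_succ_congr (e (·.2.1)) h1,
    pre_eq_pre_iff.2 (e (·.2.2.2.2.2.2.2.1)),
    pre_eq_pre_iff.2 (e fun v => (v.2.2.2.1, v.2.2.2.2.1)),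
    pre_eq_pre_iff.2 (e (·.2.2.2.2.2.1)), pre_eq_pre_iff.2 (e (·.2.2.2.2.2.2.2.2.2)),
    pre_eq_pre_iff.2 (e (·.2.2.2.2.2.2.1))⟩

lemma info2_congr (h : ∀ r < t, slice ω (idx M r) = slice ω' (idx M r))
    (h0 : X0v ω t = X0v ω' t) (h2 : X2v ω t = X2v ω' t) : info2 t ω = info2 t ω' := by
  have e := fun {γ : Type _} (φ : Slice M → γ) r (hr : r < t) => congrArg φ (h r hr)
  simp only [info2, Prod.mk.injEq]
  exact ⟨pre_succ_congr (e (·.1)) h0, pre_succ_congr (e (·.2.2.1)) h2,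
    pre_eq_pre_iff.2 (e (·.2.2.2.2.2.2.2.2.1)),
    pre_eq_pre_iff.2 (e fun v => (v.2.2.2.1, v.2.2.2.2.1)),
    pre_eq_pre_iff.2 (e (·.2.2.2.2.2.1)), pre_eq_pre_iff.2 (e (·.2.2.2.2.2.2.2.2.2)),
    pre_eq_pre_iff.2 (e (·.2.2.2.2.2.2.1))⟩

lemma info1p_congr (h : ∀ r < t, slice ω (idx M r) = slice ω' (idx M r))
    (h0 : X0v ω t = X0v ω' t) (h1 : X1v ω t = X1v ω' t) (hm : Mv ω t = Mv ω' t)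
    (hz : Zv ω t = Zv ω' t) (hy : Yv ω t = Yv ω' t) : info1p t ω = info1p t ω' := by
  have e := fun {γ : Type _} (φ : Slice M → γ) r (hr : r < t) => congrArg φ (h r hr)
  simp only [info1p, Prod.mk.injEq]
  exact ⟨pre_succ_congr (e (·.1)) h0, pre_succ_congr (e (·.2.1)) h1,
    pre_eq_pre_iff.2 (e (·.2.2.2.2.2.2.2.1)),
    pre_succ_congr (e fun v => (v.2.2.2.1, v.2.2.2.2.1)) hm,
    pre_succ_congr (e (·.2.2.2.2.2.1)) hz, pre_eq_pre_iff.2 (e (·.2.2.2.2.2.2.2.2.2)),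
    pre_succ_congr (e (·.2.2.2.2.2.2.1)) hy⟩

lemma info2p_congr (h : ∀ r < t, slice ω (idx M r) = slice ω' (idx M r))
    (h0 : X0v ω t = X0v ω' t) (h2 : X2v ω t = X2v ω' t) (hm : Mv ω t = Mv ω' t)
    (hz : Zv ω t = Zv ω' t) (hy : Yv ω t = Yv ω' t) : info2p t ω = info2p t ω' := by
  have e := fun {γ : Type _} (φ : Slice M → γ) r (hr : r < t) => congrArg φ (h r hr)
  simp only [info2p, Prod.mk.injEq]
  exact ⟨pre_succ_congr (e (·.1)) h0, pre_succ_congr (e (·.2.2.1)) h2,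
    pre_eq_pre_iff.2 (e (·.2.2.2.2.2.2.2.2.1)),
    pre_succ_congr (e fun v => (v.2.2.2.1, v.2.2.2.2.1)) hm,
    pre_succ_congr (e (·.2.2.2.2.2.1)) hz, pre_eq_pre_iff.2 (e (·.2.2.2.2.2.2.2.2.2)),
    pre_succ_congr (e (·.2.2.2.2.2.2.1)) hy⟩

end Slices

noncomputable section Truncation

variable {M : Model}

def zKerChannel (M : Model) (x0 : M.X0) (m : Bool × Bool) (z : Option (M.X1 × M.X2)) : ℝ :=
  if m = (false, false) then ind (z = none) else
    match z with
    | none => M.pe x0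
    | some _ => 1 - M.pe x0

def zKerAgree1 (M : Model) (z : Option (M.X1 × M.X2)) (m : Bool × Bool) (x : M.X1) : ℝ :=
  if m = (false, false) then 1 else
    match z with
    | none => 1
    | some w => ind (w.1 = x)

def zKerAgree2 (M : Model) (z : Option (M.X1 × M.X2)) (m : Bool × Bool) (x : M.X2) : ℝ :=
  if m = (false, false) then 1 else
    match z with
    | none => 1
    | some w => ind (w.2 = x)

lemma zKer_eq_mul (x0 : M.X0) (m : Bool × Bool) (x : M.X1 × M.X2) (z : Option (M.X1 × M.X2)) :
    zKer M x0 m x z = zKerChannel M x0 m z * zKerAgree1 M z m x.1 * zKerAgree2 M z m x.2 := by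
  rcases z with _ | w
  · by_cases hm : m = (false, false) <;> simp [zKer, zKerChannel, zKerAgree1, zKerAgree2, hm]
  · by_cases hm : m = (false, false)
    · simp [zKer, zKerChannel, zKerAgree1, zKerAgree2, hm]
    · by_cases h1 : w.1 = x.1 <;> by_cases h2 : w.2 = x.2 <;>
        simp [zKer, zKerChannel, zKerAgree1, zKerAgree2, hm, h1, h2, Prod.ext_iff]

lemma zKer_sum (x0 : M.X0) (m : Bool × Bool) (x : M.X1 × M.X2) :
    ∑ z, zKer M x0 m x z = 1 := by
  by_cases hm : m = (false, false) <;> simp [zKer, Fintype.sum_option, hm]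

lemma zKerAgree1_nonneg (z : Option (M.X1 × M.X2)) (m : Bool × Bool) (x : M.X1) :
    0 ≤ zKerAgree1 M z m x := by
  unfold zKerAgree1; split
  · exact zero_le_one
  · rcases z with _ | w
    · exact zero_le_one
    · exact ind_nonneg _

/-- The adversary's information is part of the team's common information after communication
(nestedness in Assumption 1). -/
def FactorsThroughTeamComP {A : Type*} (iap : ℕ → Traj M → A) : Prop :=
  ∀ t ω ω', teamComP t ω = teamComP t ω' → iap t ω = iap t ω'

variable {A : Type*} (σ : TeamStrategy M) (γ : AdvStrategy M A) (iap : ℕ → Traj M → A)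

def stepF1 (t : ℕ) (ω : Traj M) : ℝ :=
  σ.f1 t (info1 t ω) (M1v ω t) * zKerAgree1 M (Zv ω t) (Mv ω t) (X1v ω t) *
    σ.g1 t (info1p t ω) (U1v ω t)

def stepF2 (t : ℕ) (ω : Traj M) : ℝ :=
  σ.f2 t (info2 t ω) (M2v ω t) * zKerAgree2 M (Zv ω t) (Mv ω t) (X2v ω t) *
    σ.g2 t (info2p t ω) (U2v ω t)

def stepC (t : ℕ) (ω : Traj M) : ℝ :=
  zKerChannel M (X0v ω t) (Mv ω t) (Zv ω t) * M.obs (Zv ω t) (Mv ω t) (X0v ω t) (Yv ω t) *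
    γ.ga t (iap t ω) (UAv ω t)

def tr0 (t : ℕ) (ω : Traj M) : ℝ := M.trans0 (X0v ω t) (UAv ω t) (X0v ω (t + 1))
def tr1 (t : ℕ) (ω : Traj M) : ℝ := M.trans1 (X0v ω t) (X1v ω t) (U1v ω t) (X1v ω (t + 1))
def tr2 (t : ℕ) (ω : Traj M) : ℝ := M.trans2 (X0v ω t) (X2v ω t) (U2v ω t) (X2v ω (t + 1))

def probUpTo (t : ℕ) (ω : Traj M) : ℝ :=
  M.init0 (X0v ω 0) * M.init1 (X1v ω 0) * M.init2 (X2v ω 0) *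
  (∏ s ∈ range (t + 1), stepF1 σ s ω * stepF2 σ s ω * stepC γ iap s ω) *
  ∏ s ∈ range t, tr0 s ω * tr1 s ω * tr2 s ω

lemma prob_eq_probUpTo (ω : Traj M) : prob σ γ iap ω = probUpTo σ γ iap (M.T - 1) ω := by
  rw [probUpTo, Nat.sub_add_cancel M.hT]
  unfold prob
  congr 2
  refine prod_congr rfl fun s _ => ?_
  rw [stepF1, stepF2, stepC, zKer_eq_mul]
  ring

def stepKernel (t : ℕ) (ω : Traj M) : ℝ :=
  tr0 t ω * tr1 t ω * tr2 t ω * (stepF1 σ (t + 1) ω * stepF2 σ (t + 1) ω * stepC γ iap (t + 1) ω)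

lemma probUpTo_succ (t : ℕ) (ω : Traj M) :
    probUpTo σ γ iap (t + 1) ω = probUpTo σ γ iap t ω * stepKernel σ γ iap t ω := by
  rw [stepKernel]
  simp only [probUpTo, prod_range_succ _ (t + 1), prod_range_succ _ t]
  ring

def stageCost (t : ℕ) (ω : Traj M) : ℝ :=
  M.cost t (X0v ω t) (X1v ω t, X2v ω t) (U1v ω t, U2v ω t) (UAv ω t) +
    if (M1v ω t || M2v ω t) then M.commCost (X0v ω t) (X1v ω t, X2v ω t) else 0

lemma J_eq_sum_stageCost :
    J σ γ iap = ∑ t ∈ range M.T, ∑ ω, prob σ γ iap ω * stageCost t ω := by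
  simp only [J, totalCost, mul_sum]
  exact sum_comm

section Congr

variable {σ γ iap} {ω ω' : Traj M} {t : ℕ}

lemma stepF1_congr (h : ∀ r < t + 1, slice ω (idx M r) = slice ω' (idx M r)) :
    stepF1 σ t ω = stepF1 σ t ω' := by
  have hlt : ∀ r < t, slice ω (idx M r) = slice ω' (idx M r) := fun r hr => h r (by omega)
  have ht := h t (by omega)
  have h0 : X0v ω t = X0v ω' t := congrArg (·.1) ht
  have h1 : X1v ω t = X1v ω' t := congrArg (·.2.1) ht
  have hm : Mv ω t = Mv ω' t := congrArg (fun v => (v.2.2.2.1, v.2.2.2.2.1)) ht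
  have hz : Zv ω t = Zv ω' t := congrArg (·.2.2.2.2.2.1) ht
  rw [stepF1, stepF1, info1_congr hlt h0 h1,
    info1p_congr hlt h0 h1 hm hz (congrArg (·.2.2.2.2.2.2.1) ht), h1, hm, hz,
    show M1v ω t = M1v ω' t from congrArg (·.2.2.2.1) ht,
    show U1v ω t = U1v ω' t from congrArg (·.2.2.2.2.2.2.2.1) ht]

lemma stepF2_congr (h : ∀ r < t + 1, slice ω (idx M r) = slice ω' (idx M r)) :
    stepF2 σ t ω = stepF2 σ t ω' := by
  have hlt : ∀ r < t, slice ω (idx M r) = slice ω' (idx M r) := fun r hr => h r (by omega)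
  have ht := h t (by omega)
  have h0 : X0v ω t = X0v ω' t := congrArg (·.1) ht
  have h2 : X2v ω t = X2v ω' t := congrArg (·.2.2.1) ht
  have hm : Mv ω t = Mv ω' t := congrArg (fun v => (v.2.2.2.1, v.2.2.2.2.1)) ht
  have hz : Zv ω t = Zv ω' t := congrArg (·.2.2.2.2.2.1) ht
  rw [stepF2, stepF2, info2_congr hlt h0 h2,
    info2p_congr hlt h0 h2 hm hz (congrArg (·.2.2.2.2.2.2.1) ht), h2, hm, hz,
    show M2v ω t = M2v ω' t from congrArg (·.2.2.2.2.1) ht,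
    show U2v ω t = U2v ω' t from congrArg (·.2.2.2.2.2.2.2.2.1) ht]

lemma stepC_congr (hiap : FactorsThroughTeamComP iap)
    (h : ∀ r < t + 1, slice ω (idx M r) = slice ω' (idx M r)) :
    stepC γ iap t ω = stepC γ iap t ω' := by
  have ht := h t (by omega)
  have h0 : X0v ω t = X0v ω' t := congrArg (·.1) ht
  have hm : Mv ω t = Mv ω' t := congrArg (fun v => (v.2.2.2.1, v.2.2.2.2.1)) ht
  have hz : Zv ω t = Zv ω' t := congrArg (·.2.2.2.2.2.1) ht
  have hy : Yv ω t = Yv ω' t := congrArg (·.2.2.2.2.2.2.1) ht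
  rw [stepC, stepC, hiap t ω ω' (teamComP_congr (fun r hr => h r (by omega)) h0 hm hz hy),
    h0, hm, hz, hy, show UAv ω t = UAv ω' t from congrArg (·.2.2.2.2.2.2.2.2.2) ht]

lemma trans_congr (h : ∀ r < t + 2, slice ω (idx M r) = slice ω' (idx M r)) :
    tr0 t ω * tr1 t ω * tr2 t ω = tr0 t ω' * tr1 t ω' * tr2 t ω' := by
  have ht := h t (by omega)
  have ht' := h (t + 1) (by omega)
  simp only [slice, Prod.mk.injEq] at ht ht'
  simp only [tr0, tr1, tr2, X0v, X1v, X2v, U1v, U2v, UAv, ht, ht']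

lemma stageCost_congr (h : slice ω (idx M t) = slice ω' (idx M t)) :
    stageCost t ω = stageCost t ω' := by
  rw [stageCost, stageCost, show X0v ω t = X0v ω' t from congrArg (·.1) h,
    show X1v ω t = X1v ω' t from congrArg (·.2.1) h,
    show X2v ω t = X2v ω' t from congrArg (·.2.2.1) h,
    show M1v ω t = M1v ω' t from congrArg (·.2.2.2.1) h,
    show M2v ω t = M2v ω' t from congrArg (·.2.2.2.2.1) h,
    show U1v ω t = U1v ω' t from congrArg (·.2.2.2.2.2.2.2.1) h,
    show U2v ω t = U2v ω' t from congrArg (·.2.2.2.2.2.2.2.2.1) h,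
    show UAv ω t = UAv ω' t from congrArg (·.2.2.2.2.2.2.2.2.2) h]

lemma probUpTo_congr (hiap : FactorsThroughTeamComP iap) {s : ℕ}
    (h : ∀ r < s + 1, slice ω (idx M r) = slice ω' (idx M r)) :
    probUpTo σ γ iap s ω = probUpTo σ γ iap s ω' := by
  have h0 := h 0 (by omega)
  simp only [slice, Prod.mk.injEq] at h0
  have hle : ∀ r < s + 1, ∀ q < r + 1, slice ω (idx M q) = slice ω' (idx M q) :=
    fun r hr q hq => h q (by omega)
  rw [probUpTo, probUpTo, X0v, X1v, X2v, X0v, X1v, X2v, h0.1, h0.2.1, h0.2.2.1,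
    prod_congr rfl fun r hr => by
      rw [stepF1_congr (hle r (mem_range.1 hr)), stepF2_congr (hle r (mem_range.1 hr)),
        stepC_congr hiap (hle r (mem_range.1 hr))],
    prod_congr rfl fun r hr => trans_congr fun q hq => h q (by have := mem_range.1 hr; omega)]

end Congr

/-- The coordinates of a slice that the decisions before communication can depend on; the others
are replaced by arbitrary values. -/
def Slice.statePart (v : Slice M) : Slice M :=
  (v.1, v.2.1, v.2.2.1, false, false, none, Classical.arbitrary _, Classical.arbitrary _,
    Classical.arbitrary _, Classical.arbitrary _)

/-- The coordinates of a slice that the decisions after communication can depend on. -/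
def Slice.commPart (v : Slice M) : Slice M :=
  (v.1, v.2.1, v.2.2.1, v.2.2.2.1, v.2.2.2.2.1, v.2.2.2.2.2.1, v.2.2.2.2.2.2.1,
    Classical.arbitrary _, Classical.arbitrary _, Classical.arbitrary _)

def withSlice (G : Fin M.T → Slice M) (s : ℕ) (v : Slice M) : Traj M :=
  ofSlices (Function.update G (idx M s) v)

variable {σ γ iap} in
lemma stepKernel_withSlice (hiap : FactorsThroughTeamComP iap) {s : ℕ} (hs : s + 1 < M.T)
    (G : Fin M.T → Slice M) (v : Slice M) :
    stepKernel σ γ iap s (withSlice G (s + 1) v) =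
      M.trans0 (G (idx M s)).1 (G (idx M s)).2.2.2.2.2.2.2.2.2 v.1 *
      (M.trans1 (G (idx M s)).1 (G (idx M s)).2.1 (G (idx M s)).2.2.2.2.2.2.2.1 v.2.1 *
      (M.trans2 (G (idx M s)).1 (G (idx M s)).2.2.1 (G (idx M s)).2.2.2.2.2.2.2.2.1 v.2.2.1 *
      (σ.f1 (s + 1) (info1 (s + 1) (withSlice G (s + 1) v.statePart)) v.2.2.2.1 *
      (σ.f2 (s + 1) (info2 (s + 1) (withSlice G (s + 1) v.statePart)) v.2.2.2.2.1 *
      (zKer M v.1 (v.2.2.2.1, v.2.2.2.2.1) (v.2.1, v.2.2.1) v.2.2.2.2.2.1 *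
      (M.obs v.2.2.2.2.2.1 (v.2.2.2.1, v.2.2.2.2.1) v.1 v.2.2.2.2.2.2.1 *
      (σ.g1 (s + 1) (info1p (s + 1) (withSlice G (s + 1) v.commPart)) v.2.2.2.2.2.2.2.1 *
      (σ.g2 (s + 1) (info2p (s + 1) (withSlice G (s + 1) v.commPart)) v.2.2.2.2.2.2.2.2.1 *
      γ.ga (s + 1) (iap (s + 1) (withSlice G (s + 1) v.commPart)) v.2.2.2.2.2.2.2.2.2)))))))) := by
  set ω := withSlice G (s + 1)
  set j := idx M (s + 1)
  have hpre (v' : Slice M) : ∀ r < s + 1, slice (ω v) (idx M r) = slice (ω v') (idx M r) :=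
    fun r hr => show Function.update G j v (idx M r) = Function.update G j v' (idx M r) by
      rw [Function.update_of_ne (idx_ne (by omega) hs (by omega)),
        Function.update_of_ne (idx_ne (by omega) hs (by omega))]
  have now {β : Type _} (φ : Slice M → β) (v' : Slice M) (h : φ v = φ v') :
      φ (slice (ω v) j) = φ (slice (ω v') j) := by
    change φ (Function.update G j v j) = φ (Function.update G j v' j)
    rw [Function.update_self, Function.update_self, h]
  have hm := now (fun w => (w.2.2.2.1, w.2.2.2.2.1)) v.commPart rfl
  have hz := now (·.2.2.2.2.2.1) v.commPart rfl
  have hy := now (·.2.2.2.2.2.2.1) v.commPart rfl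
  rw [stepKernel, stepF1, stepF2, stepC, zKer_eq_mul,
    info1_congr (hpre _) (now (·.1) v.statePart rfl) (now (·.2.1) v.statePart rfl),
    info2_congr (hpre _) (now (·.1) v.statePart rfl) (now (·.2.2.1) v.statePart rfl),
    info1p_congr (hpre _) (now (·.1) v.commPart rfl) (now (·.2.1) v.commPart rfl) hm hz hy,
    info2p_congr (hpre _) (now (·.1) v.commPart rfl) (now (·.2.2.1) v.commPart rfl) hm hz hy,
    hiap (s + 1) (ω v) (ω v.commPart)
      (teamComP_congr (hpre _) (now (·.1) v.commPart rfl) hm hz hy)]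
  have hsj : idx M s ≠ j := idx_ne (by omega) hs (by omega)
  simp only [tr0, tr1, tr2, X0v, X1v, X2v, M1v, M2v, Mv, Zv, Yv, U1v, U2v, UAv, ω, withSlice,
    ofSlices, show idx M (s + 1) = j from rfl, Function.update_self, Function.update_of_ne hsj]
  ring

variable {σ γ iap} in
lemma sum_stepKernel_withSlice (hiap : FactorsThroughTeamComP iap) {s : ℕ} (hs : s + 1 < M.T)
    (G : Fin M.T → Slice M) :
    ∑ v, stepKernel σ γ iap s (withSlice G (s + 1) v) = 1 := by
  simp only [stepKernel_withSlice hiap hs, Fintype.sum_prod_type, Slice.statePart, Slice.commPart,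
    ← mul_sum, γ.ga_sum, σ.g1_sum, σ.g2_sum, M.obs_sum, zKer_sum, σ.f1_sum, σ.f2_sum,
    M.trans0_sum, M.trans1_sum, M.trans2_sum, mul_one]

variable {σ γ iap} in
lemma sum_probUpTo_succ_mul_stageCost (hiap : FactorsThroughTeamComP iap) {s t : ℕ}
    (hts : t ≤ s) (hs : s + 1 < M.T) :
    ∑ ω, probUpTo σ γ iap (s + 1) ω * stageCost t ω =
      (Fintype.card (Slice M) : ℝ)⁻¹ * ∑ ω, probUpTo σ γ iap s ω * stageCost t ω := by
  rw [sum_traj_eq_sum_slices, sum_traj_eq_sum_slices fun ω => probUpTo σ γ iap s ω * stageCost t ω]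
  simp only [probUpTo_succ, mul_right_comm _ (stepKernel σ γ iap s _)]
  refine sum_mul_eq_of_kernel (fun F => probUpTo σ γ iap s (ofSlices F) * stageCost t (ofSlices F))
    (fun F => stepKernel σ γ iap s (ofSlices F)) (idx M (s + 1)) (fun F v => ?_)
    (sum_stepKernel_withSlice hiap hs)
  have hold : ∀ r < s + 1, slice (ofSlices (Function.update F (idx M (s + 1)) v)) (idx M r) =
      slice (ofSlices F) (idx M r) :=
    fun r hr => show Function.update F _ v (idx M r) = F (idx M r) from
      Function.update_of_ne (idx_ne (by omega) hs (by omega)) ..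
  rw [probUpTo_congr hiap hold, stageCost_congr (hold t (by omega))]

variable {σ γ iap} in
lemma sum_prob_mul_stageCost (hiap : FactorsThroughTeamComP iap) {t : ℕ} (ht : t < M.T) :
    ∑ ω, prob σ γ iap ω * stageCost t ω = (Fintype.card (Slice M) : ℝ)⁻¹ ^ (M.T - 1 - t) *
      ∑ ω, probUpTo σ γ iap t ω * stageCost t ω := by
  have key (k : ℕ) (hk : t + k < M.T) : ∑ ω, probUpTo σ γ iap (t + k) ω * stageCost t ω =
      (Fintype.card (Slice M) : ℝ)⁻¹ ^ k * ∑ ω, probUpTo σ γ iap t ω * stageCost t ω := by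
    induction k with
    | zero => simp
    | succ k ih =>
      rw [← add_assoc, sum_probUpTo_succ_mul_stageCost hiap (s := t + k) (by omega) (by omega),
        ih (by omega), pow_succ]
      ring
  simp only [prob_eq_probUpTo]
  rw [← key (M.T - 1 - t) (by omega), Nat.add_sub_cancel' (by omega)]

end Truncation

noncomputable section AgentOneInfo

variable {M : Model}

abbrev Path1 (M : Model) := Fin M.T → M.X1 × M.U1

abbrev Rest1 (M : Model) :=
  (Fin M.T → M.X0) × (Fin M.T → M.X2) × (Fin M.T → Bool) × (Fin M.T → Bool) ×
  (Fin M.T → Option (M.X1 × M.X2)) × (Fin M.T → M.Y) × (Fin M.T → M.U2) × (Fin M.T → M.Ua)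

def asm1 (p : Path1 M) (ρ : Rest1 M) : Traj M :=
  (ρ.1, fun i => (p i).1, ρ.2.1, ρ.2.2.1, ρ.2.2.2.1, ρ.2.2.2.2.1, ρ.2.2.2.2.2.1,
   fun i => (p i).2, ρ.2.2.2.2.2.2.1, ρ.2.2.2.2.2.2.2)

def rest1 (ω : Traj M) : Rest1 M :=
  (ω.1, ω.2.2.1, ω.2.2.2.1, ω.2.2.2.2.1, ω.2.2.2.2.2.1, ω.2.2.2.2.2.2.1,
   ω.2.2.2.2.2.2.2.2.1, ω.2.2.2.2.2.2.2.2.2)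

def subst1 (ω : Traj M) (p : Path1 M) : Traj M := asm1 p (rest1 ω)

def split1 : Traj M ≃ Rest1 M × Path1 M where
  toFun ω := (rest1 ω, fun i => (ω.2.1 i, ω.2.2.2.2.2.2.2.1 i))
  invFun v := asm1 v.2 v.1
  left_inv _ := rfl
  right_inv _ := rfl

lemma sum_traj_eq_sum_rest1 (F : Traj M → ℝ) : ∑ ω, F ω = ∑ ρ, ∑ p, F (asm1 p ρ) := by
  rw [← Fintype.sum_prod_type']
  exact (Fintype.sum_equiv split1 _ _ fun _ => rfl)

variable {ω ω' : Traj M} {t : ℕ}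

lemma info1_eq_info1_iff : info1 t ω = info1 t ω' ↔
    (∀ r < t + 1, X0v ω r = X0v ω' r) ∧ (∀ r < t + 1, X1v ω r = X1v ω' r) ∧
    (∀ r < t, U1v ω r = U1v ω' r) ∧ (∀ r < t, Mv ω r = Mv ω' r) ∧
    (∀ r < t, Zv ω r = Zv ω' r) ∧ (∀ r < t, UAv ω r = UAv ω' r) ∧
    (∀ r < t, Yv ω r = Yv ω' r) := by
  simp only [info1, Prod.mk.injEq, pre_eq_pre_iff]

lemma info1p_eq_info1p_iff : info1p t ω = info1p t ω' ↔
    (∀ r < t + 1, X0v ω r = X0v ω' r) ∧ (∀ r < t + 1, X1v ω r = X1v ω' r) ∧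
    (∀ r < t, U1v ω r = U1v ω' r) ∧ (∀ r < t + 1, Mv ω r = Mv ω' r) ∧
    (∀ r < t + 1, Zv ω r = Zv ω' r) ∧ (∀ r < t, UAv ω r = UAv ω' r) ∧
    (∀ r < t + 1, Yv ω r = Yv ω' r) := by
  simp only [info1p, Prod.mk.injEq, pre_eq_pre_iff]

lemma info1_eq_of_info1_eq {s : ℕ} (hst : s ≤ t) (h : info1 t ω = info1 t ω') :
    info1 s ω = info1 s ω' := by
  obtain ⟨h0, h1, hu, hm, hz, ha, hy⟩ := info1_eq_info1_iff.1 h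
  exact info1_eq_info1_iff.2 ⟨fun r hr => h0 r (by omega), fun r hr => h1 r (by omega),
    fun r hr => hu r (by omega), fun r hr => hm r (by omega), fun r hr => hz r (by omega),
    fun r hr => ha r (by omega), fun r hr => hy r (by omega)⟩

lemma info1p_eq_of_info1_eq {s : ℕ} (hst : s < t) (h : info1 t ω = info1 t ω') :
    info1p s ω = info1p s ω' := by
  obtain ⟨h0, h1, hu, hm, hz, ha, hy⟩ := info1_eq_info1_iff.1 h
  exact info1p_eq_info1p_iff.2 ⟨fun r hr => h0 r (by omega), fun r hr => h1 r (by omega),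
    fun r hr => hu r (by omega), fun r hr => hm r (by omega), fun r hr => hz r (by omega),
    fun r hr => ha r (by omega), fun r hr => hy r (by omega)⟩

lemma info1_eq_of_info1p_eq (h : info1p t ω = info1p t ω') : info1 t ω = info1 t ω' := by
  obtain ⟨h0, h1, hu, hm, hz, ha, hy⟩ := info1p_eq_info1p_iff.1 h
  exact info1_eq_info1_iff.2 ⟨h0, h1, hu, fun r hr => hm r (by omega),
    fun r hr => hz r (by omega), ha, fun r hr => hy r (by omega)⟩

lemma info1_subst1 (h : teamCom t ω = teamCom t ω') (p : Path1 M) :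
    info1 t (subst1 ω p) = info1 t (subst1 ω' p) := by
  simp only [teamCom, Prod.mk.injEq] at h
  simp only [info1, Prod.mk.injEq]
  exact ⟨h.1, rfl, rfl, h.2⟩

lemma info1p_subst1 (h : teamComP t ω = teamComP t ω') (p : Path1 M) :
    info1p t (subst1 ω p) = info1p t (subst1 ω' p) := by
  simp only [teamComP, Prod.mk.injEq] at h
  simp only [info1p, Prod.mk.injEq]
  exact ⟨h.1, rfl, rfl, h.2⟩

lemma info1p_subst1_congr (ω : Traj M) {p p' : Path1 M}
    (hx : ∀ r < t + 1, (p (idx M r)).1 = (p' (idx M r)).1)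
    (hu : ∀ r < t, (p (idx M r)).2 = (p' (idx M r)).2) :
    info1p t (subst1 ω p) = info1p t (subst1 ω p') :=
  info1p_eq_info1p_iff.2 ⟨fun _ _ => rfl, hx, hu, fun _ _ => rfl, fun _ _ => rfl, fun _ _ => rfl,
    fun _ _ => rfl⟩

variable (σ : TeamStrategy M)

def lik1 (t : ℕ) (ω : Traj M) : ℝ :=
  M.init1 (X1v ω 0) * (∏ s ∈ range t, stepF1 σ s ω) * ∏ s ∈ range t, tr1 s ω

def lik1Comm (t : ℕ) (ω : Traj M) : ℝ :=
  lik1 σ t ω * σ.f1 t (info1 t ω) (M1v ω t) * zKerAgree1 M (Zv ω t) (Mv ω t) (X1v ω t)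

def lik1Act (t : ℕ) (ω : Traj M) : ℝ := lik1Comm σ t ω * σ.g1 t (info1p t ω) (U1v ω t)

def likRest1 {A : Type*} (γ : AdvStrategy M A) (iap : ℕ → Traj M → A) (t : ℕ) (ω : Traj M) : ℝ :=
  M.init0 (X0v ω 0) * M.init2 (X2v ω 0) *
  (∏ s ∈ range (t + 1), stepF2 σ s ω * stepC γ iap s ω) * ∏ s ∈ range t, tr0 s ω * tr2 s ω

lemma lik1Act_eq_lik1_mul (t : ℕ) (ω : Traj M) : lik1Act σ t ω = lik1 σ t ω * stepF1 σ t ω := by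
  rw [lik1Act, lik1Comm, stepF1]
  ring

lemma lik1_succ (t : ℕ) (ω : Traj M) : lik1 σ (t + 1) ω = lik1Act σ t ω * tr1 t ω := by
  rw [lik1Act_eq_lik1_mul, lik1, lik1, prod_range_succ, prod_range_succ]
  ring

lemma probUpTo_eq_lik1Act_mul {A : Type*} (γ : AdvStrategy M A) (iap : ℕ → Traj M → A)
    (t : ℕ) (ω : Traj M) : probUpTo σ γ iap t ω = lik1Act σ t ω * likRest1 σ γ iap t ω := by
  rw [lik1Act_eq_lik1_mul, probUpTo, likRest1, lik1, prod_range_succ _ t,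
    prod_range_succ (fun s => stepF2 σ s ω * stepC γ iap s ω) t]
  simp only [mul_assoc, prod_mul_distrib]
  ring

lemma likRest1_asm1 {A : Type*} (γ : AdvStrategy M A) {iap : ℕ → Traj M → A}
    (hiap : FactorsThroughTeamComP iap) (t : ℕ) (p p' : Path1 M) (ρ : Rest1 M) :
    likRest1 σ γ iap t (asm1 p ρ) = likRest1 σ γ iap t (asm1 p' ρ) := by
  have hC (s : ℕ) : stepC γ iap s (asm1 p ρ) = stepC γ iap s (asm1 p' ρ) := by
    rw [stepC, stepC, hiap s (asm1 p ρ) (asm1 p' ρ) rfl]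
    rfl
  simp only [likRest1, hC]
  rfl

lemma likRest1_congr_strategy {τ : TeamStrategy M} (hf : τ.f2 = σ.f2) (hg : τ.g2 = σ.g2)
    {A : Type*} (γ : AdvStrategy M A) (iap : ℕ → Traj M → A) (t : ℕ) (ω : Traj M) :
    likRest1 τ γ iap t ω = likRest1 σ γ iap t ω := by
  simp only [likRest1, stepF2, hf, hg]

variable {σ}

lemma lik1_congr (h : info1 t ω = info1 t ω') : lik1 σ t ω = lik1 σ t ω' := by
  obtain ⟨h0, h1, hu, hm, hz, -, -⟩ := info1_eq_info1_iff.1 h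
  have hF (s : ℕ) (hs : s ∈ range t) : stepF1 σ s ω = stepF1 σ s ω' := by
    have hs := mem_range.1 hs
    rw [stepF1, stepF1, info1_eq_of_info1_eq hs.le h, info1p_eq_of_info1_eq hs h,
      show M1v ω s = M1v ω' s from congrArg Prod.fst (hm s hs), hm s hs, hz s hs,
      h1 s (by omega), hu s hs]
  have htr (s : ℕ) (hs : s ∈ range t) : tr1 s ω = tr1 s ω' := by
    have hs := mem_range.1 hs
    rw [tr1, tr1, h0 s (by omega), h1 s (by omega), hu s hs, h1 (s + 1) (by omega)]
  rw [lik1, lik1, h1 0 (by omega), prod_congr rfl hF, prod_congr rfl htr]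

lemma lik1Comm_congr (h : info1p t ω = info1p t ω') : lik1Comm σ t ω = lik1Comm σ t ω' := by
  obtain ⟨-, h1, -, hm, hz, -, -⟩ := info1p_eq_info1p_iff.1 h
  rw [lik1Comm, lik1Comm, lik1_congr (info1_eq_of_info1p_eq h), info1_eq_of_info1p_eq h,
    show M1v ω t = M1v ω' t from congrArg Prod.fst (hm t (by omega)), hm t (by omega),
    hz t (by omega), h1 t (by omega)]

lemma lik1Act_congr (h : info1p t ω = info1p t ω') (hu : U1v ω t = U1v ω' t) :
    lik1Act σ t ω = lik1Act σ t ω' := by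
  rw [lik1Act, lik1Act, lik1Comm_congr h, h, hu]

lemma stepF1_nonneg (s : ℕ) (ω : Traj M) : 0 ≤ stepF1 σ s ω :=
  mul_nonneg (mul_nonneg (σ.f1_nonneg ..) (zKerAgree1_nonneg ..)) (σ.g1_nonneg ..)

lemma lik1_nonneg (t : ℕ) (ω : Traj M) : 0 ≤ lik1 σ t ω :=
  mul_nonneg (mul_nonneg (M.init1_nonneg _) (prod_nonneg fun s _ => stepF1_nonneg s ω))
    (prod_nonneg fun _ _ => M.trans1_nonneg ..)

lemma lik1Comm_nonneg (t : ℕ) (ω : Traj M) : 0 ≤ lik1Comm σ t ω :=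
  mul_nonneg (mul_nonneg (lik1_nonneg t ω) (σ.f1_nonneg ..)) (zKerAgree1_nonneg ..)

end AgentOneInfo

noncomputable section AgentOneMarginals

variable {M : Model}

def marg1 (W : Traj M → ℝ) (t : ℕ) (ω : Traj M) (x : M.X1) : ℝ :=
  ∑ p : Path1 M, ind ((p (idx M t)).1 = x) * W (subst1 ω p)

section Marginal

variable {W : Traj M → ℝ} {t : ℕ} {ω ω' : Traj M} {x : M.X1}

lemma marg1_nonneg (hW : ∀ ω, 0 ≤ W ω) : 0 ≤ marg1 W t ω x :=
  sum_nonneg fun _ _ => mul_nonneg (ind_nonneg _) (hW _)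

lemma marg1_mul_eq {φ : Traj M → ℝ} {c : ℝ}
    (h : ∀ p : Path1 M, (p (idx M t)).1 = x → φ (subst1 ω p) = c) :
    marg1 (fun ω => W ω * φ ω) t ω x = marg1 W t ω x * c := by
  rw [marg1, marg1, sum_mul]
  exact sum_congr rfl fun p _ => by
    rw [mul_assoc, ind_mul_congr fun hp => by rw [h p hp]]

lemma sum_marg1_mul {β : Type*} [Fintype β] {π : Traj M → β → ℝ} (hπ : ∀ ω, ∑ b, π ω b = 1) :
    ∑ b, marg1 (fun ω => W ω * π ω b) t ω x = marg1 W t ω x := by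
  simp only [marg1, ← mul_assoc]
  rw [sum_comm]
  exact sum_congr rfl fun p _ => by rw [← mul_sum, hπ, mul_one]

lemma marg1_congr_of_info1 (hW : ∀ ω ω', info1 t ω = info1 t ω' → W ω = W ω')
    (h : teamCom t ω = teamCom t ω') : marg1 W t ω x = marg1 W t ω' x :=
  sum_congr rfl fun p _ => by rw [hW _ _ (info1_subst1 h p)]

lemma marg1_congr_of_info1p (hW : ∀ ω ω', info1p t ω = info1p t ω' → W ω = W ω')
    (h : teamComP t ω = teamComP t ω') : marg1 W t ω x = marg1 W t ω' x :=
  sum_congr rfl fun p _ => by rw [hW _ _ (info1p_subst1 h p)]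

end Marginal

def x1of (t : ℕ) (h : Hist1 M) : M.X1 := h.2.1.getD t (Classical.arbitrary _)

def ccOf1 (h : Hist1 M) : HistC M := (h.1, h.2.2.2.1, h.2.2.2.2.1, h.2.2.2.2.2.1, h.2.2.2.2.2.2)

lemma x1of_info1 (t : ℕ) (ω : Traj M) : x1of t (info1 t ω) = X1v ω t :=
  pre_getD _ (Nat.lt_succ_self t) _

lemma x1of_info1p (t : ℕ) (ω : Traj M) : x1of t (info1p t ω) = X1v ω t :=
  pre_getD _ (Nat.lt_succ_self t) _

variable (σ : TeamStrategy M)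

/-- The conditional law of `M¹_t` given `X¹_t = x` and the team's common information `c`; it is
evaluated at an arbitrary trajectory realizing `c`, which does not matter
(`marg1_congr_of_info1`). -/
def condComm1 (t : ℕ) (c : HistC M) (x : M.X1) : Bool → ℝ :=
  normalize fun m =>
    marg1 (fun ω => lik1 σ t ω * σ.f1 t (info1 t ω) m) t (Function.invFun (teamCom t) c) x

def condAct1 (t : ℕ) (c : HistC M) (x : M.X1) : M.U1 → ℝ :=
  normalize fun u =>
    marg1 (fun ω => lik1Comm σ t ω * σ.g1 t (info1p t ω) u) t (Function.invFun (teamComP t) c) x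

def lift1 : TeamStrategy M :=
  { σ with
    f1 := fun t h => condComm1 σ t (ccOf1 h) (x1of t h)
    g1 := fun t h => condAct1 σ t (ccOf1 h) (x1of t h)
    f1_nonneg := fun t _ => normalize_nonneg fun _ =>
      marg1_nonneg fun ω => mul_nonneg (lik1_nonneg t ω) (σ.f1_nonneg ..)
    g1_nonneg := fun t _ => normalize_nonneg fun _ =>
      marg1_nonneg fun ω => mul_nonneg (lik1Comm_nonneg t ω) (σ.g1_nonneg ..)
    f1_sum := fun _ _ => sum_normalize _
    g1_sum := fun _ _ => sum_normalize _ }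

lemma lift1_f1_info1 (t : ℕ) (ω : Traj M) :
    (lift1 σ).f1 t (info1 t ω) = condComm1 σ t (teamCom t ω) (X1v ω t) := by
  rw [← x1of_info1]; rfl

lemma lift1_g1_info1p (t : ℕ) (ω : Traj M) :
    (lift1 σ).g1 t (info1p t ω) = condAct1 σ t (teamComP t ω) (X1v ω t) := by
  rw [← x1of_info1p]; rfl

variable {σ} {t : ℕ} {ω : Traj M} {x : M.X1}

lemma marg1_lik1_mul_f1 (m : Bool) :
    marg1 (fun ω => lik1 σ t ω * σ.f1 t (info1 t ω) m) t ω x =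
      marg1 (lik1 σ t) t ω x * condComm1 σ t (teamCom t ω) x m := by
  set ω₀ := Function.invFun (teamCom t) (teamCom t ω)
  have h₀ : teamCom t ω₀ = teamCom t ω := Function.invFun_eq ⟨ω, rfl⟩
  have hW (m : Bool) (ω ω' : Traj M) (h : info1 t ω = info1 t ω') :
      lik1 σ t ω * σ.f1 t (info1 t ω) m = lik1 σ t ω' * σ.f1 t (info1 t ω') m := by
    rw [lik1_congr h, h]
  calc _ = marg1 (fun ω => lik1 σ t ω * σ.f1 t (info1 t ω) m) t ω₀ x :=
        marg1_congr_of_info1 (hW m) h₀.symm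
    _ = (∑ m', marg1 (fun ω => lik1 σ t ω * σ.f1 t (info1 t ω) m') t ω₀ x) *
          condComm1 σ t (teamCom t ω) x m :=
        (sum_mul_normalize (w := fun m => marg1 (fun ω => lik1 σ t ω * σ.f1 t (info1 t ω) m) t ω₀ x)
          (fun _ => marg1_nonneg fun ω => mul_nonneg (lik1_nonneg t ω) (σ.f1_nonneg ..)) m).symm
    _ = _ := by
      rw [sum_marg1_mul fun ω => σ.f1_sum t (info1 t ω),
        marg1_congr_of_info1 (fun _ _ => lik1_congr) h₀]

lemma marg1_lik1Comm_mul_g1 (u : M.U1) :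
    marg1 (fun ω => lik1Comm σ t ω * σ.g1 t (info1p t ω) u) t ω x =
      marg1 (lik1Comm σ t) t ω x * condAct1 σ t (teamComP t ω) x u := by
  set ω₀ := Function.invFun (teamComP t) (teamComP t ω)
  have h₀ : teamComP t ω₀ = teamComP t ω := Function.invFun_eq ⟨ω, rfl⟩
  have hW (u : M.U1) (ω ω' : Traj M) (h : info1p t ω = info1p t ω') :
      lik1Comm σ t ω * σ.g1 t (info1p t ω) u = lik1Comm σ t ω' * σ.g1 t (info1p t ω') u := by
    rw [lik1Comm_congr h, h]
  calc _ = marg1 (fun ω => lik1Comm σ t ω * σ.g1 t (info1p t ω) u) t ω₀ x :=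
        marg1_congr_of_info1p (hW u) h₀.symm
    _ = (∑ u', marg1 (fun ω => lik1Comm σ t ω * σ.g1 t (info1p t ω) u') t ω₀ x) *
          condAct1 σ t (teamComP t ω) x u :=
        (sum_mul_normalize
          (w := fun u => marg1 (fun ω => lik1Comm σ t ω * σ.g1 t (info1p t ω) u) t ω₀ x)
          (fun _ => marg1_nonneg fun ω => mul_nonneg (lik1Comm_nonneg t ω) (σ.g1_nonneg ..)) u).symm
    _ = _ := by
      rw [sum_marg1_mul fun ω => σ.g1_sum t (info1p t ω),
        marg1_congr_of_info1p (fun _ _ => lik1Comm_congr) h₀]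

variable (σ) in
lemma marg1_lik1_mul_lift1_f1 (τ : TeamStrategy M) (m : Bool) :
    marg1 (fun ω => lik1 τ t ω * (lift1 σ).f1 t (info1 t ω) m) t ω x =
      marg1 (lik1 τ t) t ω x * condComm1 σ t (teamCom t ω) x m :=
  marg1_mul_eq fun p hp => by rw [lift1_f1_info1, ← hp]; rfl

variable (σ) in
lemma marg1_lik1Comm_mul_lift1_g1 (τ : TeamStrategy M) (u : M.U1) :
    marg1 (fun ω => lik1Comm τ t ω * (lift1 σ).g1 t (info1p t ω) u) t ω x =
      marg1 (lik1Comm τ t) t ω x * condAct1 σ t (teamComP t ω) x u :=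
  marg1_mul_eq fun p hp => by rw [lift1_g1_info1p, ← hp]; rfl

lemma marg1_lik1Comm :
    marg1 (lik1Comm σ t) t ω x =
      marg1 (fun ω' => lik1 σ t ω' * σ.f1 t (info1 t ω') (M1v ω t)) t ω x *
        zKerAgree1 M (Zv ω t) (Mv ω t) x := by
  rw [← marg1_mul_eq (φ := fun ω' => zKerAgree1 M (Zv ω' t) (Mv ω' t) (X1v ω' t))
    fun p hp => by rw [← hp]; rfl]
  rfl

end AgentOneMarginals

noncomputable section AgentOneLift

variable {M : Model} {σ : TeamStrategy M} {t : ℕ} {ω : Traj M}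

variable (σ) in
def margAct1 (t : ℕ) (ω : Traj M) (x : M.X1) (u : M.U1) : ℝ :=
  ∑ p : Path1 M, ind (p (idx M t) = (x, u)) * lik1Act σ t (subst1 ω p)

lemma margAct1_eq (ht : t < M.T) (x : M.X1) (u : M.U1) :
    margAct1 σ t ω x u = (Fintype.card M.U1 : ℝ)⁻¹ *
      marg1 (fun ω => lik1Comm σ t ω * σ.g1 t (info1p t ω) u) t ω x := by
  have hact (p : Path1 M) : ind (p (idx M t) = (x, u)) * lik1Act σ t (subst1 ω p) =
      ind (p (idx M t) = (x, u)) *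
        (lik1Comm σ t (subst1 ω p) * σ.g1 t (info1p t (subst1 ω p)) u) :=
    ind_mul_congr fun hp => by rw [lik1Act, show U1v (subst1 ω p) t = u from congrArg Prod.snd hp]
  rw [margAct1, sum_congr rfl fun p _ => hact p]
  -- the summand does not depend on `U¹_t`, which is free in `marg1`
  refine sum_ind_eq_pair_mul (fun p => lik1Comm σ t (subst1 ω p) *
    σ.g1 t (info1p t (subst1 ω p)) u) (idx M t) (fun p b => ?_) x u
  have hinfo : info1p t (subst1 ω (Function.update p (idx M t) ((p (idx M t)).1, b))) =
      info1p t (subst1 ω p) := by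
    refine info1p_subst1_congr ω (fun r _ => ?_) (fun r hr => ?_)
    · by_cases hrt : idx M r = idx M t
      · simp [hrt]
      · simp [Function.update_of_ne hrt]
    · simp [Function.update_of_ne (idx_ne (by omega) ht (by omega) : idx M r ≠ idx M t)]
  simp only [lik1Comm_congr hinfo, hinfo]

lemma marg1_lik1_succ (ht : t + 1 < M.T) (x' : M.X1) :
    marg1 (lik1 σ (t + 1)) (t + 1) ω x' = ∑ v : M.X1 × M.U1,
      M.trans1 (X0v ω t) v.1 v.2 x' * ((Fintype.card M.X1 : ℝ)⁻¹ * margAct1 σ t ω v.1 v.2) := by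
  set j := idx M t
  set j' := idx M (t + 1)
  have key (v : M.X1 × M.U1) (p : Path1 M) :
      ind (p j = v) * (ind ((p j').1 = x') * lik1 σ (t + 1) (subst1 ω p)) =
        M.trans1 (X0v ω t) v.1 v.2 x' *
          (ind ((p j').1 = x') * (ind (p j = v) * lik1Act σ t (subst1 ω p))) := by
    have htr : tr1 t (subst1 ω p) = M.trans1 (X0v ω t) (p j).1 (p j).2 (p j').1 := rfl
    by_cases h1 : p j = v
    · by_cases h2 : (p j').1 = x' <;> simp [lik1_succ, htr, h1, h2, mul_comm]
    · simp [h1]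
  simp only [marg1]
  rw [sum_eq_sum_fiber _ j]
  refine sum_congr rfl fun v _ => ?_
  rw [sum_congr rfl fun p _ => key v p, ← mul_sum]
  congr 1
  -- agent 1's likelihood up to its action at `t` does not depend on the coordinate `t + 1`
  rw [sum_apply_mul_eq_of_forall_update (fun p => ind (p j = v) * lik1Act σ t (subst1 ω p)) j'
    (fun p w => ?_) (fun w => ind (w.1 = x'))]
  · have hcard : ∑ w : M.X1 × M.U1, ind (w.1 = x') = Fintype.card M.U1 := by
      rw [Fintype.sum_prod_type, sum_comm]
      simp [ind]
    rw [hcard, Fintype.card_prod, Nat.cast_mul, mul_inv, mul_assoc, mul_assoc,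
      inv_mul_cancel_left₀ (Nat.cast_ne_zero.2 Fintype.card_ne_zero)]
    rfl
  · have hne : ∀ r < t + 1, idx M r ≠ j' := fun r hr => idx_ne (by omega) ht (by omega)
    have hupd : ∀ r < t + 1, Function.update p j' w (idx M r) = p (idx M r) :=
      fun r hr => Function.update_of_ne (hne r hr) ..
    rw [hupd t (by omega), lik1Act_congr (info1p_subst1_congr ω
      (fun r hr => congrArg Prod.fst (hupd r hr))
      (fun r hr => congrArg Prod.snd (hupd r (by omega))))
      (congrArg Prod.snd (hupd t (by omega)))]

lemma margAct1_lift1 (ht : t < M.T)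
    (hmarg : ∀ ω x, marg1 (lik1 (lift1 σ) t) t ω x = marg1 (lik1 σ t) t ω x)
    (ω : Traj M) (x : M.X1) (u : M.U1) : margAct1 (lift1 σ) t ω x u = margAct1 σ t ω x u := by
  have hcomm (ω : Traj M) (x : M.X1) (m : Bool) :
      marg1 (fun ω => lik1 (lift1 σ) t ω * (lift1 σ).f1 t (info1 t ω) m) t ω x =
        marg1 (fun ω => lik1 σ t ω * σ.f1 t (info1 t ω) m) t ω x := by
    rw [marg1_lik1_mul_lift1_f1, marg1_lik1_mul_f1, hmarg]
  have hlikComm (ω : Traj M) (x : M.X1) :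
      marg1 (lik1Comm (lift1 σ) t) t ω x = marg1 (lik1Comm σ t) t ω x := by
    rw [marg1_lik1Comm, marg1_lik1Comm, hcomm]
  rw [margAct1_eq ht, margAct1_eq ht, marg1_lik1Comm_mul_lift1_g1, marg1_lik1Comm_mul_g1, hlikComm]

lemma marg1_lik1_lift1 : ∀ t < M.T, ∀ ω x,
    marg1 (lik1 (lift1 σ) t) t ω x = marg1 (lik1 σ t) t ω x
  | 0, _, ω, x => by simp only [marg1, lik1, prod_range_zero]
  | t + 1, ht, ω, x => by
    simp only [marg1_lik1_succ ht, margAct1_lift1 (by omega) (marg1_lik1_lift1 t (by omega))]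

variable {A : Type*} (γ : AdvStrategy M A) {iap : ℕ → Traj M → A}

lemma sum_probUpTo_mul_stageCost_asm1 (υ : TeamStrategy M) (hiap : FactorsThroughTeamComP iap)
    (t : ℕ) (ρ : Rest1 M) (p₀ : Path1 M) :
    ∑ p, probUpTo υ γ iap t (asm1 p ρ) * stageCost t (asm1 p ρ) =
      ∑ v : M.X1 × M.U1, likRest1 υ γ iap t (asm1 p₀ ρ) * stageCost t (asm1 (fun _ => v) ρ) *
        margAct1 υ t (asm1 p₀ ρ) v.1 v.2 := by
  rw [sum_eq_sum_fiber _ (idx M t)]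
  refine sum_congr rfl fun v _ => ?_
  rw [margAct1, mul_sum]
  refine sum_congr rfl fun p _ => ?_
  by_cases hp : p (idx M t) = v
  · have hslice : slice (asm1 p ρ) (idx M t) = slice (asm1 (fun _ => v) ρ) (idx M t) := by
      simp [slice, asm1, hp]
    rw [probUpTo_eq_lik1Act_mul, likRest1_asm1 υ γ hiap t p p₀ ρ, stageCost_congr hslice]
    simp only [hp, ind_pos, one_mul]
    exact mul_rotate _ _ _
  · simp [hp]

lemma sum_probUpTo_mul_stageCost_lift1 (hiap : FactorsThroughTeamComP iap) (ht : t < M.T) :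
    ∑ ω, probUpTo (lift1 σ) γ iap t ω * stageCost t ω =
      ∑ ω, probUpTo σ γ iap t ω * stageCost t ω := by
  simp only [sum_traj_eq_sum_rest1 fun ω => probUpTo _ γ iap t ω * stageCost t ω,
    sum_probUpTo_mul_stageCost_asm1 γ _ hiap t _ (Classical.arbitrary _),
    margAct1_lift1 ht (marg1_lik1_lift1 t ht), likRest1_congr_strategy σ (τ := lift1 σ) rfl rfl]

lemma J_lift1 (hiap : FactorsThroughTeamComP iap) : J (lift1 σ) γ iap = J σ γ iap := by
  rw [J_eq_sum_stageCost, J_eq_sum_stageCost]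
  refine sum_congr rfl fun t ht => ?_
  rw [sum_prob_mul_stageCost hiap (mem_range.1 ht), sum_prob_mul_stageCost hiap (mem_range.1 ht),
    sum_probUpTo_mul_stageCost_lift1 γ hiap (mem_range.1 ht)]

end AgentOneLift

noncomputable section Symmetry

def Model.swap (M : Model) : Model where
  T := M.T
  hT := M.hT
  X0 := M.X0
  X1 := M.X2
  X2 := M.X1
  U1 := M.U2
  U2 := M.U1
  Ua := M.Ua
  Y := M.Y
  init0 := M.init0
  init1 := M.init2
  init2 := M.init1
  trans0 := M.trans0
  trans1 := M.trans2
  trans2 := M.trans1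
  pe := M.pe
  obs z m x y := M.obs (z.map Prod.swap) m.swap x y
  cost t x0 x u ua := M.cost t x0 x.swap u.swap ua
  commCost x0 x := M.commCost x0 x.swap
  init0_nonneg := M.init0_nonneg
  init1_nonneg := M.init2_nonneg
  init2_nonneg := M.init1_nonneg
  init0_sum := M.init0_sum
  init1_sum := M.init2_sum
  init2_sum := M.init1_sum
  trans0_nonneg := M.trans0_nonneg
  trans1_nonneg := M.trans2_nonneg
  trans2_nonneg := M.trans1_nonneg
  trans0_sum := M.trans0_sum
  trans1_sum := M.trans2_sum
  trans2_sum := M.trans1_sum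
  pe_nonneg := M.pe_nonneg
  pe_le_one := M.pe_le_one
  obs_nonneg _ _ _ _ := M.obs_nonneg ..
  obs_sum _ _ _ := M.obs_sum ..

variable {M : Model}

lemma map_swap_map_swap {α β : Type*} (z : Option (α × β)) :
    (z.map Prod.swap).map Prod.swap = z := by
  cases z <;> rfl

def trajSwap : Traj M ≃ Traj M.swap where
  toFun ω := (ω.1, ω.2.2.1, ω.2.1, ω.2.2.2.2.1, ω.2.2.2.1, fun i => (ω.2.2.2.2.2.1 i).map Prod.swap,
    ω.2.2.2.2.2.2.1, ω.2.2.2.2.2.2.2.2.1, ω.2.2.2.2.2.2.2.1, ω.2.2.2.2.2.2.2.2.2)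
  invFun ω := (ω.1, ω.2.2.1, ω.2.1, ω.2.2.2.2.1, ω.2.2.2.1,
    fun i => (ω.2.2.2.2.2.1 i).map Prod.swap,
    ω.2.2.2.2.2.2.1, ω.2.2.2.2.2.2.2.2.1, ω.2.2.2.2.2.2.2.1, ω.2.2.2.2.2.2.2.2.2)
  left_inv ω := Prod.ext rfl <| Prod.ext rfl <| Prod.ext rfl <| Prod.ext rfl <| Prod.ext rfl <|
    Prod.ext (funext fun i => map_swap_map_swap (ω.2.2.2.2.2.1 i)) rfl
  right_inv ω := Prod.ext rfl <| Prod.ext rfl <| Prod.ext rfl <| Prod.ext rfl <| Prod.ext rfl <|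
    Prod.ext (funext fun i => map_swap_map_swap (ω.2.2.2.2.2.1 i)) rfl

section SwapHist

variable {α β γ δ ε P Q : Type*}

def swapHist (h : List α × List β × List γ × List (Bool × Bool) × List (Option (P × Q)) ×
    List δ × List ε) :
    List α × List β × List γ × List (Bool × Bool) × List (Option (Q × P)) × List δ × List ε :=
  (h.1, h.2.1, h.2.2.1, h.2.2.2.1.map Prod.swap, h.2.2.2.2.1.map (Option.map Prod.swap),
    h.2.2.2.2.2)

lemma swapHist_swapHist (h : List α × List β × List γ × List (Bool × Bool) ×
    List (Option (P × Q)) × List δ × List ε) : swapHist (swapHist h) = h := by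
  simp [swapHist, Function.comp_def, Option.map_map]

def swapCom (c : List α × List (Bool × Bool) × List (Option (P × Q)) × List δ × List ε) :
    List α × List (Bool × Bool) × List (Option (Q × P)) × List δ × List ε :=
  (c.1, c.2.1.map Prod.swap, c.2.2.1.map (Option.map Prod.swap), c.2.2.2)

lemma swapCom_injective :
    Function.Injective (swapCom : List α × List (Bool × Bool) × List (Option (P × Q)) × List δ ×
      List ε → _) := by
  intro c c' h
  have := congrArg swapCom h
  simpa [swapCom, Function.comp_def, Option.map_map] using this

end SwapHist

variable (t : ℕ) (ω : Traj M)

lemma X0v_trajSwap : X0v (trajSwap ω) t = X0v ω t := rfl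
lemma X1v_trajSwap : X1v (trajSwap ω) t = X2v ω t := rfl
lemma X2v_trajSwap : X2v (trajSwap ω) t = X1v ω t := rfl
lemma M1v_trajSwap : M1v (trajSwap ω) t = M2v ω t := rfl
lemma M2v_trajSwap : M2v (trajSwap ω) t = M1v ω t := rfl
lemma U1v_trajSwap : U1v (trajSwap ω) t = U2v ω t := rfl
lemma U2v_trajSwap : U2v (trajSwap ω) t = U1v ω t := rfl
lemma UAv_trajSwap : UAv (trajSwap ω) t = UAv ω t := rfl

lemma info1_trajSwap : info1 t (trajSwap ω) = swapHist (info2 t ω) := by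
  simp only [info1, info2, swapHist, ← pre_comp]; rfl

lemma info1p_trajSwap : info1p t (trajSwap ω) = swapHist (info2p t ω) := by
  simp only [info1p, info2p, swapHist, ← pre_comp]; rfl

lemma info2_trajSwap : info2 t (trajSwap ω) = swapHist (info1 t ω) := by
  simp only [info1, info2, swapHist, ← pre_comp]; rfl

lemma info2p_trajSwap : info2p t (trajSwap ω) = swapHist (info1p t ω) := by
  simp only [info1p, info2p, swapHist, ← pre_comp]; rfl

lemma teamCom_trajSwap : teamCom t (trajSwap ω) = swapCom (teamCom t ω) := by
  simp only [teamCom, swapCom, ← pre_comp]; rfl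

lemma teamComP_trajSwap : teamComP t (trajSwap ω) = swapCom (teamComP t ω) := by
  simp only [teamComP, swapCom, ← pre_comp]; rfl

lemma zKer_swap (x0 : M.X0) (m : Bool × Bool) (x1 : M.X1) (x2 : M.X2)
    (z : Option (M.X1 × M.X2)) :
    zKer M.swap x0 m.swap (x2, x1) (z.map Prod.swap) = zKer M x0 m (x1, x2) z := by
  rcases z with _ | ⟨a, b⟩ <;> simp [zKer, Model.swap, Prod.ext_iff, and_comm]

lemma zKer_trajSwap : zKer M.swap (X0v (trajSwap ω) t) (Mv (trajSwap ω) t)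
    (X1v (trajSwap ω) t, X2v (trajSwap ω) t) (Zv (trajSwap ω) t) =
      zKer M (X0v ω t) (Mv ω t) (X1v ω t, X2v ω t) (Zv ω t) :=
  zKer_swap (X0v ω t) (Mv ω t) (X1v ω t) (X2v ω t) (Zv ω t)

lemma obs_trajSwap : M.swap.obs (Zv (trajSwap ω) t) (Mv (trajSwap ω) t) (X0v (trajSwap ω) t)
    (Yv (trajSwap ω) t) = M.obs (Zv ω t) (Mv ω t) (X0v ω t) (Yv ω t) :=
  congrArg (M.obs · (Mv ω t) (X0v ω t) (Yv ω t)) (map_swap_map_swap (Zv ω t))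

lemma totalCost_trajSwap : totalCost (trajSwap ω) = totalCost ω := by
  refine sum_congr rfl fun s _ => ?_
  show _ + (if (M2v ω s || M1v ω s) = true then _ else 0) = _
  simp only [Bool.or_comm]
  rfl

def TeamStrategy.swap (σ : TeamStrategy M) : TeamStrategy M.swap where
  f1 t h := σ.f2 t (swapHist h)
  f2 t h := σ.f1 t (swapHist h)
  g1 t h := σ.g2 t (swapHist h)
  g2 t h := σ.g1 t (swapHist h)
  f1_nonneg _ _ _ := σ.f2_nonneg ..
  f2_nonneg _ _ _ := σ.f1_nonneg ..
  g1_nonneg _ _ _ := σ.g2_nonneg ..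
  g2_nonneg _ _ _ := σ.g1_nonneg ..
  f1_sum _ _ := σ.f2_sum ..
  f2_sum _ _ := σ.f1_sum ..
  g1_sum _ _ := σ.g2_sum ..
  g2_sum _ _ := σ.g1_sum ..

def TeamStrategy.unswap (σ : TeamStrategy M.swap) : TeamStrategy M where
  f1 t h := σ.f2 t (swapHist h)
  f2 t h := σ.f1 t (swapHist h)
  g1 t h := σ.g2 t (swapHist h)
  g2 t h := σ.g1 t (swapHist h)
  f1_nonneg _ _ _ := σ.f2_nonneg ..
  f2_nonneg _ _ _ := σ.f1_nonneg ..
  g1_nonneg _ _ _ := σ.g2_nonneg ..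
  g2_nonneg _ _ _ := σ.g1_nonneg ..
  f1_sum _ _ := σ.f2_sum ..
  f2_sum _ _ := σ.f1_sum ..
  g1_sum _ _ := σ.g2_sum ..
  g2_sum _ _ := σ.g1_sum ..

lemma TeamStrategy.unswap_swap (σ : TeamStrategy M) : σ.swap.unswap = σ := by
  cases σ
  simp only [TeamStrategy.swap, TeamStrategy.unswap]
  congr <;> funext t h <;> exact congrArg _ (swapHist_swapHist h)

def AdvStrategy.swap {A : Type*} (γ : AdvStrategy M A) : AdvStrategy M.swap A :=
  ⟨γ.ga, γ.ga_nonneg, γ.ga_sum⟩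

lemma prob_unswap (σ : TeamStrategy M.swap) {A : Type*} (γ : AdvStrategy M A)
    (iap : ℕ → Traj M → A) (ω : Traj M) :
    prob σ.unswap γ iap ω =
      prob σ γ.swap (fun t ω' => iap t (trajSwap.symm ω')) (trajSwap ω) := by
  simp only [prob, zKer_trajSwap, obs_trajSwap]
  simp only [X0v_trajSwap, X1v_trajSwap, X2v_trajSwap, M1v_trajSwap, M2v_trajSwap,
    U1v_trajSwap, U2v_trajSwap, UAv_trajSwap, info1_trajSwap, info2_trajSwap, info1p_trajSwap,
    info2p_trajSwap, Equiv.symm_apply_apply]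
  simp only [TeamStrategy.unswap, AdvStrategy.swap, Model.swap]
  congr 1
  · congr 1
    · ring
    · exact prod_congr rfl fun s _ => by ring
  · exact prod_congr rfl fun s _ => by ring

lemma J_unswap (σ : TeamStrategy M.swap) {A : Type*} (γ : AdvStrategy M A)
    (iap : ℕ → Traj M → A) :
    J σ.unswap γ iap = J σ γ.swap (fun t ω' => iap t (trajSwap.symm ω')) :=
  Fintype.sum_equiv trajSwap _ _ fun ω => by rw [prob_unswap, totalCost_trajSwap]

lemma FactorsThroughTeamComP.trajSwap_symm {A : Type*} {iap : ℕ → Traj M → A}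
    (hiap : FactorsThroughTeamComP iap) :
    FactorsThroughTeamComP (fun t ω' => iap t (trajSwap.symm ω')) := by
  intro t ω₁ ω₂ h
  refine hiap t _ _ (swapCom_injective ?_)
  rw [← teamComP_trajSwap, ← teamComP_trajSwap, Equiv.apply_symm_apply, Equiv.apply_symm_apply, h]

end Symmetry

noncomputable section Lift

variable {M : Model} (t : ℕ) (ω : Traj M)

def lift (σ : TeamStrategy M) : TeamStrategy M := (lift1 (lift1 σ).swap).unswap

lemma J_lift (σ : TeamStrategy M) {A : Type*} (γ : AdvStrategy M A) {iap : ℕ → Traj M → A}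
    (hiap : FactorsThroughTeamComP iap) : J (lift σ) γ iap = J σ γ iap := by
  rw [lift, J_unswap, J_lift1 _ hiap.trajSwap_symm, ← J_unswap, TeamStrategy.unswap_swap,
    J_lift1 γ hiap]

variable (σ : TeamStrategy M)

lemma lift_f1_info1 : (lift σ).f1 t (info1 t ω) = condComm1 σ t (teamCom t ω) (X1v ω t) :=
  (congrArg ((lift1 σ).f1 t) (swapHist_swapHist _)).trans (lift1_f1_info1 σ t ω)

lemma lift_g1_info1p : (lift σ).g1 t (info1p t ω) = condAct1 σ t (teamComP t ω) (X1v ω t) :=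
  (congrArg ((lift1 σ).g1 t) (swapHist_swapHist _)).trans (lift1_g1_info1p σ t ω)

lemma lift_f2_info2 : (lift σ).f2 t (info2 t ω) =
    condComm1 (lift1 σ).swap t (swapCom (teamCom t ω)) (X2v ω t) :=
  (congrArg ((lift1 (lift1 σ).swap).f1 t) (info1_trajSwap t ω).symm).trans <| by
    rw [lift1_f1_info1, teamCom_trajSwap]; rfl

lemma lift_g2_info2p : (lift σ).g2 t (info2p t ω) =
    condAct1 (lift1 σ).swap t (swapCom (teamComP t ω)) (X2v ω t) :=
  (congrArg ((lift1 (lift1 σ).swap).g1 t) (info1p_trajSwap t ω).symm).trans <| by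
    rw [lift1_g1_info1p, teamComP_trajSwap]; rfl

lemma lift_simplified (IS : InfoStructure M) : Simplified IS (lift σ) := by
  refine ⟨fun t ω ω' hx hC hD => ?_, fun t ω ω' hx hC hD => ?_, fun t ω ω' hx hC hD => ?_,
    fun t ω ω' hx hC hD => ?_⟩
  · rw [lift_f1_info1, lift_f1_info1, hx, (IS.cd_team t ω ω').1 ⟨hC, hD⟩]
  · rw [lift_f2_info2, lift_f2_info2, hx, (IS.cd_team t ω ω').1 ⟨hC, hD⟩]
  · rw [lift_g1_info1p, lift_g1_info1p, hx, (IS.cdp_team t ω ω').1 ⟨hC, hD⟩]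
  · rw [lift_g2_info2p, lift_g2_info2p, hx, (IS.cdp_team t ω ω').1 ⟨hC, hD⟩]

end Lift

lemma SuG_eq_SuGs (M : Model) (IS : InfoStructure M) : SuG M IS = SuGs M IS := by
  have hiap : FactorsThroughTeamComP IS.infoCp := fun t ω ω' h => ((IS.cdp_team t ω ω').2 h).1
  -- both values are infima of the same set of reals, so no boundedness is needed
  have hrange : Set.range (fun σ : TeamStrategy M => ⨆ γ : AdvStrategy M IS.C, J σ γ IS.infoCp) =
      Set.range fun σ : {σ // Simplified IS σ} => ⨆ γ : AdvStrategy M IS.C, J σ.1 γ IS.infoCp := by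
    ext v
    constructor
    · rintro ⟨σ, rfl⟩
      exact ⟨⟨lift σ, lift_simplified σ IS⟩, iSup_congr fun γ => J_lift σ γ hiap⟩
    · rintro ⟨σ, rfl⟩
      exact ⟨σ.1, rfl⟩
  exact congrArg sInf hrange

theorem corollary1_general (M : Model) (IS : InfoStructure M)
    (σs : TeamStrategy M)
    (hmin : (⨆ γ : AdvStrategy M IS.C, J σs γ IS.infoCp) = SuGs M IS) :
    (⨆ γ : AdvStrategy M IS.C, J σs γ IS.infoCp) = SuG M IS ∧
    SuG M IS = SuGs M IS :=
  ⟨hmin.trans (SuG_eq_SuGs M IS).symm, SuG_eq_SuGs M IS⟩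

/-- Corollary 1 of the paper: if `(f*,g*)` is a min-max strategy for the
team in the simplified game `G_s`, then it is a min-max strategy in the original game `G`,
and the min-max values of `G` and `G_s` coincide. -/
theorem corollary1 (M : Model) (IS : InfoStructure M)
    (σs : TeamStrategy M) (hσs : Simplified IS σs)
    (hmin : (⨆ γ : AdvStrategy M IS.C, J σs γ IS.infoCp) = SuGs M IS) :
    (⨆ γ : AdvStrategy M IS.C, J σs γ IS.infoCp) = SuG M IS ∧
    SuG M IS = SuGs M IS :=
  corollary1_general M IS σs hmin

end TA
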